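/- arXiv:2010.13687 — 8 statements merged into one kernel-verified Lean document; each statement's English description precedes it below -/
import Mathlib

section
/- (Theorem 1, first result: exact unbiasedness of the JINI estimator under linear finite-sample bias.) Let p ≥ 1, E := EuclideanSpace ℝ (Fin p), (Ω, 𝔉, P) a probability space with P a probability measure, and θ₀ ∈ E. For each n ∈ ℕ let B n : E →L[ℝ] E be a continuous linear map, c n ∈ E, and let π̂ n, θ̂ n, W n : Ω → E be integrable random vectors such that: (i) ∫ π̂ n dP = θ₀ + B n θ₀ + c n; (ii) ∫ W n dP = 0; (iii) P-almost surely, π̂ n = θ̂ n + B n (θ̂ n) + c n + W n. Suppose there exist C > 0 and β > 0 with ‖B n‖ ≤ C * (n : ℝ)^(-β) (operator norm) for all n ≥ 1. Then there exists N : ℕ such that for all n ≥ N, ∫ θ̂ n dP = θ₀, i.e. the estimator θ̂ n is exactly unbiased for all sufficiently large (but finite) n. -/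
/-!
Taking expectations in the defining equation `π̂ = θ̂ + B θ̂ + c + W` and comparing with the
mean of `π̂` gives `θ₀ + B θ₀ = E θ̂ + B (E θ̂)`. Since `‖B n‖ = O(n^{-β})`, eventually
`‖B n‖ < 1`, and then `id + B n` is injective.
-/

open MeasureTheory Filter Topology

lemma eventually_lt_one_of_le_mul_rpow_neg {u : ℕ → ℝ} {C β : ℝ} (hβ : 0 < β)
    (hu : ∀ n : ℕ, 1 ≤ n → u n ≤ C * (n : ℝ) ^ (-β)) :
    ∀ᶠ n in atTop, u n < 1 := by
  have hbound : Tendsto (fun n : ℕ => C * (n : ℝ) ^ (-β)) atTop (𝓝 0) := by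
    simpa using ((tendsto_rpow_neg_atTop hβ).comp tendsto_natCast_atTop_atTop).const_mul C
  filter_upwards [eventually_ge_atTop 1, hbound.eventually (gt_mem_nhds one_pos)] with n hn hlt
  exact (hu n hn).trans_lt hlt

namespace ContinuousLinearMap

variable {𝕜 E : Type*} [NontriviallyNormedField 𝕜] [NormedAddCommGroup E] [NormedSpace 𝕜 E]

theorem injective_self_add_apply_of_norm_lt_one (L : E →L[𝕜] E) (hL : ‖L‖ < 1) :
    Function.Injective fun x => x + L x := by
  intro x y hxy
  have hdiff : x - y = L (y - x) := by
    rw [map_sub]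
    linear_combination (norm := module) hxy
  have hle : ‖x - y‖ ≤ ‖L‖ * ‖x - y‖ := by
    calc ‖x - y‖ = ‖L (y - x)‖ := by rw [hdiff]
      _ ≤ ‖L‖ * ‖y - x‖ := L.le_opNorm _
      _ = ‖L‖ * ‖x - y‖ := by rw [norm_sub_rev]
  have hzero : ‖x - y‖ = 0 := by nlinarith [norm_nonneg (x - y)]
  exact sub_eq_zero.1 (norm_eq_zero.1 hzero)

end ContinuousLinearMap

theorem integral_add_apply_add_const_add {Ω E : Type*} [MeasurableSpace Ω] {P : Measure Ω}
    [IsProbabilityMeasure P] [NormedAddCommGroup E] [NormedSpace ℝ E] [CompleteSpace E]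
    (L : E →L[ℝ] E) (c : E) {X Y : Ω → E} (hX : Integrable X P) (hY : Integrable Y P) :
    ∫ ω, X ω + L (X ω) + c + Y ω ∂P = (∫ ω, X ω ∂P) + L (∫ ω, X ω ∂P) + c + ∫ ω, Y ω ∂P := by
  have hLX : Integrable (fun ω => L (X ω)) P := L.integrable_comp hX
  rw [integral_add (f := fun ω => X ω + L (X ω) + c) ((hX.add hLX).add (integrable_const c)) hY,
    integral_add (f := fun ω => X ω + L (X ω)) (hX.add hLX) (integrable_const c),
    integral_add hX hLX,
    L.integral_comp_comm hX, integral_const, probReal_univ, one_smul]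

theorem jini_unbiased_linear_bias_general
    (p : ℕ) {Ω : Type*} [MeasurableSpace Ω]
    (P : Measure Ω) [IsProbabilityMeasure P]
    (θ₀ : EuclideanSpace ℝ (Fin p))
    (B : ℕ → EuclideanSpace ℝ (Fin p) →L[ℝ] EuclideanSpace ℝ (Fin p))
    (c : ℕ → EuclideanSpace ℝ (Fin p))
    (πhat θhat W : ℕ → Ω → EuclideanSpace ℝ (Fin p))
    (hθint : ∀ n, Integrable (θhat n) P)
    (hWint : ∀ n, Integrable (W n) P)
    (hπmean : ∀ n, ∫ ω, πhat n ω ∂P = θ₀ + B n θ₀ + c n)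
    (hWmean : ∀ n, ∫ ω, W n ω ∂P = 0)
    (hfix : ∀ n, ∀ᵐ ω ∂P, πhat n ω = θhat n ω + B n (θhat n ω) + c n + W n ω)
    (C β : ℝ) (hβ : 0 < β)
    (hB : ∀ n : ℕ, 1 ≤ n → ‖B n‖ ≤ C * (n : ℝ) ^ (-β)) :
    ∃ N : ℕ, ∀ n : ℕ, N ≤ n → ∫ ω, θhat n ω ∂P = θ₀ := by
  obtain ⟨N, hN⟩ := eventually_atTop.1 (eventually_lt_one_of_le_mul_rpow_neg hβ hB)
  refine ⟨N, fun n hn => (B n).injective_self_add_apply_of_norm_lt_one (hN n hn) ?_⟩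
  have hmean : θ₀ + B n θ₀ + c n = (∫ ω, θhat n ω ∂P) + B n (∫ ω, θhat n ω ∂P) + c n := by
    rw [← hπmean n, integral_congr_ae (hfix n),
      integral_add_apply_add_const_add (B n) (c n) (hθint n) (hWint n), hWmean n, add_zero]
  exact add_right_cancel hmean.symm

/-- Theorem 1, first result: the JINI estimator is exactly unbiased for all
sufficiently large (but finite) `n` when the finite-sample bias is linear,
`b(θ, n) = B n θ + c n` with `‖B n‖ = O(n^{-β})`. -/
theorem jini_unbiased_linear_bias
    (p : ℕ) (hp : 1 ≤ p) {Ω : Type*} [MeasurableSpace Ω]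
    (P : Measure Ω) [IsProbabilityMeasure P]
    (θ₀ : EuclideanSpace ℝ (Fin p))
    (B : ℕ → EuclideanSpace ℝ (Fin p) →L[ℝ] EuclideanSpace ℝ (Fin p))
    (c : ℕ → EuclideanSpace ℝ (Fin p))
    (πhat θhat W : ℕ → Ω → EuclideanSpace ℝ (Fin p))
    (hπint : ∀ n, Integrable (πhat n) P)
    (hθint : ∀ n, Integrable (θhat n) P)
    (hWint : ∀ n, Integrable (W n) P)
    (hπmean : ∀ n, ∫ ω, πhat n ω ∂P = θ₀ + B n θ₀ + c n)
    (hWmean : ∀ n, ∫ ω, W n ω ∂P = 0)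
    (hfix : ∀ n, ∀ᵐ ω ∂P, πhat n ω = θhat n ω + B n (θhat n ω) + c n + W n ω)
    (C β : ℝ) (hC : 0 < C) (hβ : 0 < β)
    (hB : ∀ n : ℕ, 1 ≤ n → ‖B n‖ ≤ C * (n : ℝ) ^ (-β)) :
    ∃ N : ℕ, ∀ n : ℕ, N ≤ n → ∫ ω, θhat n ω ∂P = θ₀ :=
  jini_unbiased_linear_bias_general p P θ₀ B c πhat θhat W hθint hWint hπmean hWmean hfix C β hβ hB
end

section
/- (Theorem 1, third result.) Let p ≥ 1, E := EuclideanSpace ℝ (Fin p), (Ω, 𝔉, P) a probability space with P a probability measure, Θ ⊆ E and θ₀ ∈ Θ. For each n ∈ ℕ let b n : E → E be given by b n θ = B n θ + c n + r n θ, where B n : E →L[ℝ] E, c n ∈ E, and r n : E → E. Suppose there exist constants C₁ > 0, β₁ > 0, R > 0, β₃ > 0 such that for all n ≥ 1: ‖B n‖ ≤ C₁ * (n : ℝ)^(-β₁) (operator norm) and ‖r n θ‖ ≤ R * (n : ℝ)^(-β₃) for every θ ∈ Θ. For each n let θ̂ n : Ω → E be an integrable random vector with θ̂ n ∈ Θ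 almost surely, such that b n ∘ θ̂ n is integrable and the expectation identity ∫ θ̂ n dP - θ₀ = b n θ₀ - ∫ b n (θ̂ n ω) dP(ω) holds. Then there exist K > 0 and N : ℕ such that for all n ≥ N, ‖∫ θ̂ n dP - θ₀‖ ≤ K * (n : ℝ)^(-β₃). -/
open MeasureTheory Filter

/-!
Write `Δ = E[θ̂] - θ₀`. Since `B n` is linear it commutes with the expectation, so the JINI
identity becomes `Δ + B n Δ = r n θ₀ - E[r n θ̂]`, whose right-hand side has norm at most
`2 R n^{-β₃}`. Once `‖B n‖ ≤ 1/2`, which holds for all large `n` because `‖B n‖ = O(n^{-β₁})`,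
the map `I + B n` is boundedly invertible with `‖Δ‖ ≤ 2 ‖Δ + B n Δ‖ ≤ 4 R n^{-β₃}`.
-/

section

variable {E : Type*} [NormedAddCommGroup E] [NormedSpace ℝ E]

theorem norm_le_two_mul_norm_add_apply {T : E →L[ℝ] E} (hT : ‖T‖ ≤ 1 / 2) (x : E) :
    ‖x‖ ≤ 2 * ‖x + T x‖ := by
  have hTx : ‖T x‖ ≤ 1 / 2 * ‖x‖ := (T.le_opNorm x).trans (by gcongr)
  have htri : ‖x‖ ≤ ‖x + T x‖ + ‖T x‖ := by
    simpa using norm_sub_le (x + T x) (T x)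
  linarith

variable [CompleteSpace E] {Ω : Type*} [MeasurableSpace Ω] {P : Measure Ω}
  [IsProbabilityMeasure P] {b r : E → E} {T : E →L[ℝ] E} {c : E} {X : Ω → E}

theorem integral_comp_eq_map_integral_add_add (hb : ∀ θ, b θ = T θ + c + r θ)
    (hX : Integrable X P) (hbX : Integrable (fun ω => b (X ω)) P) :
    ∫ ω, b (X ω) ∂P = T (∫ ω, X ω ∂P) + c + ∫ ω, r (X ω) ∂P := by
  have hTX : Integrable (fun ω => T (X ω)) P := T.integrable_comp hX
  have hc : Integrable (fun _ : Ω => c) P := integrable_const c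
  have hrX : Integrable (fun ω => r (X ω)) P := by
    refine ((hbX.sub hTX).sub hc).congr (Eventually.of_forall fun ω => ?_)
    simp only [Pi.sub_apply, hb]
    abel
  have hTXc : Integrable (fun ω => T (X ω) + c) P := hTX.add hc
  simp only [hb]
  rw [integral_add hTXc hrX, integral_add hTX hc, integral_const, probReal_univ,
    one_smul, T.integral_comp_comm hX]

theorem sub_add_map_sub_eq_of_integral_sub_eq (hb : ∀ θ, b θ = T θ + c + r θ) {θ₀ : E}
    (hX : Integrable X P) (hbX : Integrable (fun ω => b (X ω)) P)
    (hid : (∫ ω, X ω ∂P) - θ₀ = b θ₀ - ∫ ω, b (X ω) ∂P) :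
    ((∫ ω, X ω ∂P) - θ₀) + T ((∫ ω, X ω ∂P) - θ₀) = r θ₀ - ∫ ω, r (X ω) ∂P := by
  rw [integral_comp_eq_map_integral_add_add hb hX hbX, hb θ₀] at hid
  rw [map_sub, hid]
  abel

theorem norm_integral_sub_le_of_norm_map_le_half (hb : ∀ θ, b θ = T θ + c + r θ)
    (hT : ‖T‖ ≤ 1 / 2) {Θ : Set E} {M : ℝ} (hr : ∀ θ ∈ Θ, ‖r θ‖ ≤ M) {θ₀ : E} (hθ₀ : θ₀ ∈ Θ)
    (hX : Integrable X P) (hXΘ : ∀ᵐ ω ∂P, X ω ∈ Θ) (hbX : Integrable (fun ω => b (X ω)) P)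
    (hid : (∫ ω, X ω ∂P) - θ₀ = b θ₀ - ∫ ω, b (X ω) ∂P) :
    ‖(∫ ω, X ω ∂P) - θ₀‖ ≤ 4 * M := by
  have hrX : ‖∫ ω, r (X ω) ∂P‖ ≤ M := by
    simpa using norm_integral_le_of_norm_le_const (μ := P) (hXΘ.mono fun ω hω => hr _ hω)
  calc ‖(∫ ω, X ω ∂P) - θ₀‖
      ≤ 2 * ‖r θ₀ - ∫ ω, r (X ω) ∂P‖ := by
        rw [← sub_add_map_sub_eq_of_integral_sub_eq hb hX hbX hid]
        exact norm_le_two_mul_norm_add_apply hT _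
    _ ≤ 2 * (M + M) := by gcongr; exact (norm_sub_le _ _).trans (add_le_add (hr θ₀ hθ₀) hrX)
    _ = 4 * M := by ring

end

theorem eventually_mul_natCast_rpow_neg_le {C β ε : ℝ} (hβ : 0 < β) (hε : 0 < ε) :
    ∀ᶠ n : ℕ in atTop, C * (n : ℝ) ^ (-β) ≤ ε := by
  have h : Tendsto (fun n : ℕ => C * (n : ℝ) ^ (-β)) atTop (nhds 0) := by
    simpa using ((tendsto_rpow_neg_atTop hβ).comp tendsto_natCast_atTop_atTop).const_mul C
  exact h.eventually_le_const hε

theorem jini_bias_order_C3_general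
    (p : ℕ) {Ω : Type*} [MeasurableSpace Ω]
    (P : Measure Ω) [IsProbabilityMeasure P]
    (Θ : Set (EuclideanSpace ℝ (Fin p)))
    (θ₀ : EuclideanSpace ℝ (Fin p)) (hθ₀ : θ₀ ∈ Θ)
    (b : ℕ → EuclideanSpace ℝ (Fin p) → EuclideanSpace ℝ (Fin p))
    (B : ℕ → EuclideanSpace ℝ (Fin p) →L[ℝ] EuclideanSpace ℝ (Fin p))
    (c : ℕ → EuclideanSpace ℝ (Fin p))
    (r : ℕ → EuclideanSpace ℝ (Fin p) → EuclideanSpace ℝ (Fin p))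
    (hbdef : ∀ n θ, b n θ = B n θ + c n + r n θ)
    (C₁ β₁ R β₃ : ℝ) (hβ₁ : 0 < β₁) (hR : 0 < R)
    (hBnorm : ∀ n : ℕ, 1 ≤ n → ‖B n‖ ≤ C₁ * (n : ℝ) ^ (-β₁))
    (hrnorm : ∀ n : ℕ, 1 ≤ n → ∀ θ ∈ Θ, ‖r n θ‖ ≤ R * (n : ℝ) ^ (-β₃))
    (θhat : ℕ → Ω → EuclideanSpace ℝ (Fin p))
    (hθint : ∀ n, Integrable (θhat n) P)
    (hθΘ : ∀ n, ∀ᵐ ω ∂P, θhat n ω ∈ Θ)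
    (hbint : ∀ n, Integrable (fun ω => b n (θhat n ω)) P)
    (hid : ∀ n, (∫ ω, θhat n ω ∂P) - θ₀ = b n θ₀ - ∫ ω, b n (θhat n ω) ∂P) :
    ∃ K : ℝ, 0 < K ∧ ∃ N : ℕ, ∀ n : ℕ, N ≤ n →
      ‖(∫ ω, θhat n ω ∂P) - θ₀‖ ≤ K * (n : ℝ) ^ (-β₃) := by
  obtain ⟨N, hN⟩ := ((eventually_ge_atTop 1).and
    (eventually_mul_natCast_rpow_neg_le (C := C₁) hβ₁ one_half_pos)).exists_forall_of_atTop
  refine ⟨4 * R, by positivity, N, fun n hn => ?_⟩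
  obtain ⟨hn1, hBsmall⟩ := hN n hn
  rw [mul_assoc]
  exact norm_integral_sub_le_of_norm_map_le_half (hbdef n) ((hBnorm n hn1).trans hBsmall)
    (hrnorm n hn1) hθ₀ (hθint n) (hθΘ n) (hbint n) (hid n)

/-- Theorem 1, third result: under Assumption C.3 (linear part plus a remainder
of uniform order `n^{-β₃}` on `Θ`), the JINI estimator has bias of order
`O(n^{-β₃})`. -/
theorem jini_bias_order_C3
    (p : ℕ) (hp : 1 ≤ p) {Ω : Type*} [MeasurableSpace Ω]
    (P : Measure Ω) [IsProbabilityMeasure P]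
    (Θ : Set (EuclideanSpace ℝ (Fin p)))
    (θ₀ : EuclideanSpace ℝ (Fin p)) (hθ₀ : θ₀ ∈ Θ)
    (b : ℕ → EuclideanSpace ℝ (Fin p) → EuclideanSpace ℝ (Fin p))
    (B : ℕ → EuclideanSpace ℝ (Fin p) →L[ℝ] EuclideanSpace ℝ (Fin p))
    (c : ℕ → EuclideanSpace ℝ (Fin p))
    (r : ℕ → EuclideanSpace ℝ (Fin p) → EuclideanSpace ℝ (Fin p))
    (hbdef : ∀ n θ, b n θ = B n θ + c n + r n θ)
    (C₁ β₁ R β₃ : ℝ) (hC₁ : 0 < C₁) (hβ₁ : 0 < β₁) (hR : 0 < R) (hβ₃ : 0 < β₃)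
    (hBnorm : ∀ n : ℕ, 1 ≤ n → ‖B n‖ ≤ C₁ * (n : ℝ) ^ (-β₁))
    (hrnorm : ∀ n : ℕ, 1 ≤ n → ∀ θ ∈ Θ, ‖r n θ‖ ≤ R * (n : ℝ) ^ (-β₃))
    (θhat : ℕ → Ω → EuclideanSpace ℝ (Fin p))
    (hθint : ∀ n, Integrable (θhat n) P)
    (hθΘ : ∀ n, ∀ᵐ ω ∂P, θhat n ω ∈ Θ)
    (hbint : ∀ n, Integrable (fun ω => b n (θhat n ω)) P)
    (hid : ∀ n, (∫ ω, θhat n ω ∂P) - θ₀ = b n θ₀ - ∫ ω, b n (θhat n ω) ∂P) :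
    ∃ K : ℝ, 0 < K ∧ ∃ N : ℕ, ∀ n : ℕ, N ≤ n →
      ‖(∫ ω, θhat n ω ∂P) - θ₀‖ ≤ K * (n : ℝ) ^ (-β₃) :=
  jini_bias_order_C3_general p P Θ θ₀ hθ₀ b B c r hbdef C₁ β₁ R β₃ hβ₁ hR hBnorm hrnorm θhat hθint
    hθΘ hbint hid
end

section
/- (Theorem 1, fourth result.) Let p ≥ 1, E := EuclideanSpace ℝ (Fin p), (Ω, 𝔉, P) a probability space with P a probability measure, Θ ⊆ E and θ₀ ∈ Θ. Let C, D ≥ 0 and α, β > 0. For each n ≥ 1 let b n : E → E satisfy ‖b n θ - b n θ'‖ ≤ C * (n : ℝ)^(-β) * ‖θ - θ'‖ for all θ, θ' ∈ Θ, and let θ̂ n : Ω → E be an integrable random vector with θ̂ n ∈ Θ almost surely such that b n ∘ θ̂ n is integrable, ∫ ‖θ̂ n - θ₀‖ dP ≤ D * (n : ℝ)^(-α), and the expectation identity ∫ θ̂ n dP - θ₀ = b n θ₀ - ∫ b n (θ̂ n ω) dP(ω) holds. Then for all n ≥ 1, ‖∫ θ̂ n dP - θ₀‖ ≤ C * D *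 (n : ℝ)^(-(α + β)). -/
open MeasureTheory

/- The identity rewrites the bias as `b θ₀ - E[b θ̂] = E[b θ₀ - b θ̂]`; the Lipschitz bound of
size `C n^{-β}` on `Θ` then controls it by `C n^{-β} E‖θ̂ - θ₀‖ ≤ C n^{-β} · D n^{-α}`. -/

theorem norm_sub_integral_comp_le_of_lipschitz_bound {Ω E F : Type*} [MeasurableSpace Ω]
    {μ : Measure Ω} [IsProbabilityMeasure μ] [NormedAddCommGroup E]
    [NormedAddCommGroup F] [NormedSpace ℝ F] [CompleteSpace F] {s : Set E} {g : E → F} {K : ℝ}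
    (hg : ∀ x ∈ s, ∀ y ∈ s, ‖g x - g y‖ ≤ K * ‖x - y‖) {X : Ω → E} {x₀ : E} (hx₀ : x₀ ∈ s)
    (hXs : ∀ᵐ ω ∂μ, X ω ∈ s) (hX : Integrable X μ) (hgX : Integrable (fun ω => g (X ω)) μ) :
    ‖g x₀ - ∫ ω, g (X ω) ∂μ‖ ≤ K * ∫ ω, ‖X ω - x₀‖ ∂μ := by
  have hmean : g x₀ - ∫ ω, g (X ω) ∂μ = ∫ ω, (g x₀ - g (X ω)) ∂μ := by
    rw [integral_sub (integrable_const _) hgX, integral_const, probReal_univ, one_smul]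
  rw [hmean, ← integral_const_mul]
  refine norm_integral_le_of_norm_le ((hX.sub (integrable_const x₀)).norm.const_mul K) ?_
  filter_upwards [hXs] with ω hω
  simpa only [norm_sub_rev x₀] using hg x₀ hx₀ (X ω) hω

theorem jini_bias_order_C_general
    (p : ℕ) {Ω : Type*} [MeasurableSpace Ω]
    (P : Measure Ω) [IsProbabilityMeasure P]
    (Θ : Set (EuclideanSpace ℝ (Fin p)))
    (θ₀ : EuclideanSpace ℝ (Fin p)) (hθ₀ : θ₀ ∈ Θ)
    (C D α β : ℝ) (hC : 0 ≤ C)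
    (b : ℕ → EuclideanSpace ℝ (Fin p) → EuclideanSpace ℝ (Fin p))
    (hb : ∀ n : ℕ, 1 ≤ n → ∀ θ ∈ Θ, ∀ θ' ∈ Θ,
      ‖b n θ - b n θ'‖ ≤ C * (n : ℝ) ^ (-β) * ‖θ - θ'‖)
    (θhat : ℕ → Ω → EuclideanSpace ℝ (Fin p))
    (hθint : ∀ n, Integrable (θhat n) P)
    (hθΘ : ∀ n, ∀ᵐ ω ∂P, θhat n ω ∈ Θ)
    (hbint : ∀ n, Integrable (fun ω => b n (θhat n ω)) P)
    (hmom : ∀ n : ℕ, 1 ≤ n → ∫ ω, ‖θhat n ω - θ₀‖ ∂P ≤ D * (n : ℝ) ^ (-α))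
    (hid : ∀ n, (∫ ω, θhat n ω ∂P) - θ₀ = b n θ₀ - ∫ ω, b n (θhat n ω) ∂P) :
    ∀ n : ℕ, 1 ≤ n →
      ‖(∫ ω, θhat n ω ∂P) - θ₀‖ ≤ C * D * (n : ℝ) ^ (-(α + β)) := by
  intro n hn
  have hn0 : (0 : ℝ) < n := by exact_mod_cast hn
  rw [hid n]
  calc ‖b n θ₀ - ∫ ω, b n (θhat n ω) ∂P‖
      ≤ C * (n : ℝ) ^ (-β) * ∫ ω, ‖θhat n ω - θ₀‖ ∂P :=
        norm_sub_integral_comp_le_of_lipschitz_bound (hb n hn) hθ₀ (hθΘ n) (hθint n) (hbint n)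
    _ ≤ C * (n : ℝ) ^ (-β) * (D * (n : ℝ) ^ (-α)) := by
        gcongr
        exact hmom n hn
    _ = C * D * (n : ℝ) ^ (-(α + β)) := by
        rw [neg_add, Real.rpow_add hn0]
        ring

/-- Theorem 1, fourth result: under the Lipschitz bias bound of Assumption C and
the first-moment bound of Assumption B, the JINI estimator has bias bounded by
`C * D * n^{-(α+β)}`. -/
theorem jini_bias_order_C
    (p : ℕ) (hp : 1 ≤ p) {Ω : Type*} [MeasurableSpace Ω]
    (P : Measure Ω) [IsProbabilityMeasure P]
    (Θ : Set (EuclideanSpace ℝ (Fin p)))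
    (θ₀ : EuclideanSpace ℝ (Fin p)) (hθ₀ : θ₀ ∈ Θ)
    (C D α β : ℝ) (hC : 0 ≤ C) (hD : 0 ≤ D) (hα : 0 < α) (hβ : 0 < β)
    (b : ℕ → EuclideanSpace ℝ (Fin p) → EuclideanSpace ℝ (Fin p))
    (hb : ∀ n : ℕ, 1 ≤ n → ∀ θ ∈ Θ, ∀ θ' ∈ Θ,
      ‖b n θ - b n θ'‖ ≤ C * (n : ℝ) ^ (-β) * ‖θ - θ'‖)
    (θhat : ℕ → Ω → EuclideanSpace ℝ (Fin p))
    (hθint : ∀ n, Integrable (θhat n) P)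
    (hθΘ : ∀ n, ∀ᵐ ω ∂P, θhat n ω ∈ Θ)
    (hbint : ∀ n, Integrable (fun ω => b n (θhat n ω)) P)
    (hmom : ∀ n : ℕ, 1 ≤ n → ∫ ω, ‖θhat n ω - θ₀‖ ∂P ≤ D * (n : ℝ) ^ (-α))
    (hid : ∀ n, (∫ ω, θhat n ω ∂P) - θ₀ = b n θ₀ - ∫ ω, b n (θhat n ω) ∂P) :
    ∀ n : ℕ, 1 ≤ n →
      ‖(∫ ω, θhat n ω ∂P) - θ₀‖ ≤ C * D * (n : ℝ) ^ (-(α + β)) :=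
  jini_bias_order_C_general p P Θ θ₀ hθ₀ C D α β hC b hb θhat hθint hθΘ hbint hmom hid
end

section
/- (Proposition 1, first result: bias of the bootstrap bias corrected estimator under linear finite-sample bias.) Let p ≥ 1, E := EuclideanSpace ℝ (Fin p), (Ω, 𝔉, P) a probability space with P a probability measure, and θ₀ ∈ E. For each n ∈ ℕ let B n : E →L[ℝ] E, c n ∈ E, and let π̂ n, θ̃ n, W n : Ω → E be integrable random vectors such that: (i) ∫ π̂ n dP = θ₀ + B n θ₀ + c n; (ii) ∫ W n dP = 0; (iii) P-almost surely, θ̃ n = 2 • π̂ n - (π̂ n + B n (π̂ n) + c n + W n). Suppose there exist C₁ > 0, β₁ > 0, C₂ > 0, β > 0 such that for all n ≥ 1, ‖B n‖ ≤ C₁ * (n : ℝ)^(-β₁) (operator norm) and ‖B n θ₀ + c n‖ ≤ C₂ * (n : ℝ)^(-β). Then for all n ≥ 1, ‖∫ θ̃ n dP - θ₀‖ ≤ C₁ * C₂ * (n : ℝ)^(-(β + β₁)). -/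
/-! Because the bias `θ ↦ B θ + c` is affine, taking expectations in the defining identity of the
BBC estimator commutes with `B`, and the first-order bias `B θ₀ + c` cancels: the bias of `θ̃`
is exactly `-B (B θ₀ + c)`, the bias of the bias. Its norm is at most `‖B‖ ‖B θ₀ + c‖`, and the
two rates multiply. -/

open MeasureTheory

section LinearBias

variable {E : Type*} [NormedAddCommGroup E] [NormedSpace ℝ E] [CompleteSpace E]
  {Ω : Type*} [MeasurableSpace Ω] {P : Measure Ω} [IsProbabilityMeasure P]

theorem integral_two_smul_sub_linear_bias (A : E →L[ℝ] E) (c : E) {X W : Ω → E}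
    (hX : Integrable X P) (hW : Integrable W P) :
    ∫ ω, (2 : ℝ) • X ω - (X ω + A (X ω) + c + W ω) ∂P =
      (2 : ℝ) • (∫ ω, X ω ∂P) - ((∫ ω, X ω ∂P) + A (∫ ω, X ω ∂P) + c + ∫ ω, W ω ∂P) := by
  have hXA : Integrable (fun ω => X ω + A (X ω)) P := hX.add (A.integrable_comp hX)
  have hXAc : Integrable (fun ω => X ω + A (X ω) + c) P := hXA.add (integrable_const c)
  have h2X : Integrable (fun ω => (2 : ℝ) • X ω) P := hX.smul (2 : ℝ)
  have hXAcW : Integrable (fun ω => X ω + A (X ω) + c + W ω) P := hXAc.add hW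
  rw [integral_sub h2X hXAcW, integral_smul, integral_add hXAc hW,
    integral_add hXA (integrable_const c), integral_add hX (A.integrable_comp hX),
    integral_const, A.integral_comp_comm hX, probReal_univ, one_smul]

theorem integral_bootstrap_correction_sub_eq (A : E →L[ℝ] E) (θ₀ c : E) {X Y W : Ω → E}
    (hX : Integrable X P) (hW : Integrable W P)
    (hXmean : ∫ ω, X ω ∂P = θ₀ + A θ₀ + c) (hWmean : ∫ ω, W ω ∂P = 0)
    (hY : ∀ᵐ ω ∂P, Y ω = (2 : ℝ) • X ω - (X ω + A (X ω) + c + W ω)) :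
    (∫ ω, Y ω ∂P) - θ₀ = -A (A θ₀ + c) := by
  rw [integral_congr_ae hY, integral_two_smul_sub_linear_bias A c hX hW, hXmean, hWmean]
  simp only [map_add, two_smul, add_zero]
  abel

end LinearBias

theorem norm_apply_le_mul_rpow_neg_add {E F : Type*} [SeminormedAddCommGroup E]
    [SeminormedAddCommGroup F] [NormedSpace ℝ E] [NormedSpace ℝ F]
    (A : E →L[ℝ] F) (x : E) {C₁ C₂ β₁ β n : ℝ} (hn : 0 < n)
    (hA : ‖A‖ ≤ C₁ * n ^ (-β₁)) (hx : ‖x‖ ≤ C₂ * n ^ (-β)) :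
    ‖A x‖ ≤ C₁ * C₂ * n ^ (-(β + β₁)) :=
  calc ‖A x‖ ≤ ‖A‖ * ‖x‖ := A.le_opNorm x
    _ ≤ (C₁ * n ^ (-β₁)) * (C₂ * n ^ (-β)) :=
        mul_le_mul hA hx (norm_nonneg x) ((norm_nonneg A).trans hA)
    _ = C₁ * C₂ * n ^ (-(β + β₁)) := by
        rw [neg_add, Real.rpow_add hn]; ring

theorem bbc_bias_linear_general
    (p : ℕ) {Ω : Type*} [MeasurableSpace Ω]
    (P : Measure Ω) [IsProbabilityMeasure P]
    (θ₀ : EuclideanSpace ℝ (Fin p))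
    (B : ℕ → EuclideanSpace ℝ (Fin p) →L[ℝ] EuclideanSpace ℝ (Fin p))
    (c : ℕ → EuclideanSpace ℝ (Fin p))
    (πhat θtilde W : ℕ → Ω → EuclideanSpace ℝ (Fin p))
    (hπint : ∀ n, Integrable (πhat n) P)
    (hWint : ∀ n, Integrable (W n) P)
    (hπmean : ∀ n, ∫ ω, πhat n ω ∂P = θ₀ + B n θ₀ + c n)
    (hWmean : ∀ n, ∫ ω, W n ω ∂P = 0)
    (hBBC : ∀ n, ∀ᵐ ω ∂P, θtilde n ω =
      (2 : ℝ) • πhat n ω - (πhat n ω + B n (πhat n ω) + c n + W n ω))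
    (C₁ β₁ C₂ β : ℝ)
    (hBnorm : ∀ n : ℕ, 1 ≤ n → ‖B n‖ ≤ C₁ * (n : ℝ) ^ (-β₁))
    (hbnorm : ∀ n : ℕ, 1 ≤ n → ‖B n θ₀ + c n‖ ≤ C₂ * (n : ℝ) ^ (-β)) :
    ∀ n : ℕ, 1 ≤ n →
      ‖(∫ ω, θtilde n ω ∂P) - θ₀‖ ≤ C₁ * C₂ * (n : ℝ) ^ (-(β + β₁)) := by
  intro n hn
  rw [integral_bootstrap_correction_sub_eq (B n) θ₀ (c n) (hπint n) (hWint n) (hπmean n)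
    (hWmean n) (hBBC n), norm_neg]
  exact norm_apply_le_mul_rpow_neg_add (B n) _ (by exact_mod_cast hn) (hBnorm n hn) (hbnorm n hn)

/-- Proposition 1, first result: bias of the bootstrap bias corrected (BBC)
estimator under linear finite-sample bias `b(θ, n) = B n θ + c n`. -/
theorem bbc_bias_linear
    (p : ℕ) (hp : 1 ≤ p) {Ω : Type*} [MeasurableSpace Ω]
    (P : Measure Ω) [IsProbabilityMeasure P]
    (θ₀ : EuclideanSpace ℝ (Fin p))
    (B : ℕ → EuclideanSpace ℝ (Fin p) →L[ℝ] EuclideanSpace ℝ (Fin p))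
    (c : ℕ → EuclideanSpace ℝ (Fin p))
    (πhat θtilde W : ℕ → Ω → EuclideanSpace ℝ (Fin p))
    (hπint : ∀ n, Integrable (πhat n) P)
    (hθint : ∀ n, Integrable (θtilde n) P)
    (hWint : ∀ n, Integrable (W n) P)
    (hπmean : ∀ n, ∫ ω, πhat n ω ∂P = θ₀ + B n θ₀ + c n)
    (hWmean : ∀ n, ∫ ω, W n ω ∂P = 0)
    (hBBC : ∀ n, ∀ᵐ ω ∂P, θtilde n ω =
      (2 : ℝ) • πhat n ω - (πhat n ω + B n (πhat n ω) + c n + W n ω))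
    (C₁ β₁ C₂ β : ℝ) (hC₁ : 0 < C₁) (hβ₁ : 0 < β₁) (hC₂ : 0 < C₂) (hβ : 0 < β)
    (hBnorm : ∀ n : ℕ, 1 ≤ n → ‖B n‖ ≤ C₁ * (n : ℝ) ^ (-β₁))
    (hbnorm : ∀ n : ℕ, 1 ≤ n → ‖B n θ₀ + c n‖ ≤ C₂ * (n : ℝ) ^ (-β)) :
    ∀ n : ℕ, 1 ≤ n →
      ‖(∫ ω, θtilde n ω ∂P) - θ₀‖ ≤ C₁ * C₂ * (n : ℝ) ^ (-(β + β₁)) :=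
  bbc_bias_linear_general p P θ₀ B c πhat θtilde W hπint hWint hπmean hWmean hBBC C₁ β₁ C₂ β hBnorm
    hbnorm
end

section
/- (Proposition 1, third result.) Let p ≥ 1, E := EuclideanSpace ℝ (Fin p), (Ω, 𝔉, P) a probability space with P a probability measure, Θ ⊆ E and θ₀ ∈ Θ. For each n ∈ ℕ let b n : E → E be given by b n θ = B n θ + c n + r n θ with B n : E →L[ℝ] E, c n ∈ E and r n : E → E, and suppose there exist C₁ > 0, β₁ > 0, C₂ > 0, β > 0, R > 0, β₃ > 0 such that for all n ≥ 1: ‖B n‖ ≤ C₁ * (n : ℝ)^(-β₁), ‖b n θ₀‖ ≤ C₂ * (n : ℝ)^(-β), and ‖r n θ‖ ≤ R * (n : ℝ)^(-β₃) for every θ ∈ Θ. For each n let π̂ n, θ̃ n : Ω → E be integrable random vectors with π̂ n ∈ Θ almost surely, such that b n ∘ π̂ n is integrable, ∫ π̂ n dP = θ₀ + b n θ₀, and ∫ θ̃ n dP - θ₀ = b n θ₀ - ∫ b n (π̂ n ω) dP(ω). Then for all n ≥ 1, ‖∫ θ̃ n dP - θ₀‖ ≤ (C₁ * C₂ + 2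 * R) * (n : ℝ)^(-min (β + β₁) β₃). -/
/-!
The initial estimator is unbiased for `θ₀ + b(θ₀)`, so the linear part of `b` turns
`E[b(π̂)]` into `b` evaluated at that mean, up to the averaged remainder. Hence the BBC bias
`b(θ₀) - E[b(π̂)]` equals `-B (b θ₀) + (r θ₀ - E[r(π̂)])`: a product of two small factors,
of order `n^{-(β+β₁)}`, plus two remainders of order `n^{-β₃}`.
-/

open MeasureTheory

section AffinePlusRemainder

variable {Ω E F : Type*} [MeasurableSpace Ω] {P : Measure Ω} [IsProbabilityMeasure P]
  [NormedAddCommGroup E] [NormedSpace ℝ E] [CompleteSpace E]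
  [NormedAddCommGroup F] [NormedSpace ℝ F] [CompleteSpace F]
  {X : Ω → E}

theorem integral_comp_of_eq_clm_add_const_add {f g : E → F} {L : E →L[ℝ] F} {c : F}
    (hf : ∀ x, f x = L x + c + g x) (hX : Integrable X P) (hfX : Integrable (fun ω => f (X ω)) P) :
    ∫ ω, f (X ω) ∂P = L (∫ ω, X ω ∂P) + c + ∫ ω, g (X ω) ∂P := by
  have hLX : Integrable (fun ω => L (X ω)) P := L.integrable_comp hX
  have hgX : Integrable (fun ω => g (X ω)) P := by
    have hg : (fun ω => g (X ω)) = fun ω => f (X ω) - L (X ω) - c := by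
      funext ω
      rw [hf]
      abel
    rw [hg]
    exact (hfX.sub hLX).sub (integrable_const c)
  simp_rw [hf]
  rw [integral_add (f := fun ω => L (X ω) + c) (hLX.add (integrable_const c)) hgX,
    integral_add hLX (integrable_const c), integral_const, L.integral_comp_comm hX, probReal_univ,
    one_smul]

theorem apply_sub_integral_comp_eq_of_integral_eq {f g : E → E} {L : E →L[ℝ] E} {c : E}
    (hf : ∀ x, f x = L x + c + g x) (hX : Integrable X P)
    (hfX : Integrable (fun ω => f (X ω)) P) {x₀ : E}
    (hmean : ∫ ω, X ω ∂P = x₀ + f x₀) :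
    f x₀ - ∫ ω, f (X ω) ∂P = -L (f x₀) + (g x₀ - ∫ ω, g (X ω) ∂P) := by
  rw [integral_comp_of_eq_clm_add_const_add hf hX hfX, hmean, map_add]
  nth_rw 1 [hf x₀]
  abel

end AffinePlusRemainder

theorem add_rpow_neg_le_rpow_neg_min {x A B a b : ℝ} (hx : 1 ≤ x) (hA : 0 ≤ A) (hB : 0 ≤ B) :
    A * x ^ (-a) + B * x ^ (-b) ≤ (A + B) * x ^ (-min a b) := by
  have ha : x ^ (-a) ≤ x ^ (-min a b) :=
    Real.rpow_le_rpow_of_exponent_le hx (neg_le_neg (min_le_left a b))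
  have hb : x ^ (-b) ≤ x ^ (-min a b) :=
    Real.rpow_le_rpow_of_exponent_le hx (neg_le_neg (min_le_right a b))
  rw [add_mul]
  gcongr

theorem bbc_bias_order_C3_general
    (p : ℕ) {Ω : Type*} [MeasurableSpace Ω]
    (P : Measure Ω) [IsProbabilityMeasure P]
    (Θ : Set (EuclideanSpace ℝ (Fin p)))
    (θ₀ : EuclideanSpace ℝ (Fin p)) (hθ₀ : θ₀ ∈ Θ)
    (b : ℕ → EuclideanSpace ℝ (Fin p) → EuclideanSpace ℝ (Fin p))
    (B : ℕ → EuclideanSpace ℝ (Fin p) →L[ℝ] EuclideanSpace ℝ (Fin p))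
    (c : ℕ → EuclideanSpace ℝ (Fin p))
    (r : ℕ → EuclideanSpace ℝ (Fin p) → EuclideanSpace ℝ (Fin p))
    (hbdef : ∀ n θ, b n θ = B n θ + c n + r n θ)
    (C₁ β₁ C₂ β R β₃ : ℝ) (hC₁ : 0 < C₁) (hC₂ : 0 < C₂)
    (hR : 0 < R)
    (hBnorm : ∀ n : ℕ, 1 ≤ n → ‖B n‖ ≤ C₁ * (n : ℝ) ^ (-β₁))
    (hbnorm : ∀ n : ℕ, 1 ≤ n → ‖b n θ₀‖ ≤ C₂ * (n : ℝ) ^ (-β))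
    (hrnorm : ∀ n : ℕ, 1 ≤ n → ∀ θ ∈ Θ, ‖r n θ‖ ≤ R * (n : ℝ) ^ (-β₃))
    (πhat θtilde : ℕ → Ω → EuclideanSpace ℝ (Fin p))
    (hπint : ∀ n, Integrable (πhat n) P)
    (hπΘ : ∀ n, ∀ᵐ ω ∂P, πhat n ω ∈ Θ)
    (hbint : ∀ n, Integrable (fun ω => b n (πhat n ω)) P)
    (hπmean : ∀ n, ∫ ω, πhat n ω ∂P = θ₀ + b n θ₀)
    (hid : ∀ n, (∫ ω, θtilde n ω ∂P) - θ₀ = b n θ₀ - ∫ ω, b n (πhat n ω) ∂P) :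
    ∀ n : ℕ, 1 ≤ n →
      ‖(∫ ω, θtilde n ω ∂P) - θ₀‖ ≤
        (C₁ * C₂ + 2 * R) * (n : ℝ) ^ (-(min (β + β₁) β₃)) := by
  intro n hn
  have hn1 : (1 : ℝ) ≤ n := by exact_mod_cast hn
  have hlinear : ‖B n (b n θ₀)‖ ≤ C₁ * C₂ * (n : ℝ) ^ (-(β + β₁)) :=
    calc ‖B n (b n θ₀)‖ ≤ ‖B n‖ * (C₂ * (n : ℝ) ^ (-β)) := (B n).le_opNorm_of_le (hbnorm n hn)
      _ ≤ C₁ * (n : ℝ) ^ (-β₁) * (C₂ * (n : ℝ) ^ (-β)) := by gcongr; exact hBnorm n hn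
      _ = C₁ * C₂ * (n : ℝ) ^ (-(β + β₁)) := by
        rw [neg_add, Real.rpow_add (by positivity)]
        ring
  have hremainder : ‖r n θ₀ - ∫ ω, r n (πhat n ω) ∂P‖ ≤ 2 * R * (n : ℝ) ^ (-β₃) := by
    have hmean : ‖∫ ω, r n (πhat n ω) ∂P‖ ≤ R * (n : ℝ) ^ (-β₃) := by
      simpa using norm_integral_le_of_norm_le_const
        ((hπΘ n).mono fun ω hω => hrnorm n hn _ hω) (μ := P)
    linarith [norm_sub_le_of_le (hrnorm n hn θ₀ hθ₀) hmean]
  rw [hid n, apply_sub_integral_comp_eq_of_integral_eq (hbdef n) (hπint n) (hbint n) (hπmean n)]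
  calc _ ≤ ‖B n (b n θ₀)‖ + ‖r n θ₀ - ∫ ω, r n (πhat n ω) ∂P‖ := by
        simpa only [norm_neg] using norm_add_le (-B n (b n θ₀)) _
    _ ≤ C₁ * C₂ * (n : ℝ) ^ (-(β + β₁)) + 2 * R * (n : ℝ) ^ (-β₃) := add_le_add hlinear hremainder
    _ ≤ _ := add_rpow_neg_le_rpow_neg_min hn1 (by positivity) (by positivity)

/-- Proposition 1, third result: bias of the bootstrap bias corrected (BBC)
estimator under Assumption C.3. -/
theorem bbc_bias_order_C3
    (p : ℕ) (hp : 1 ≤ p) {Ω : Type*} [MeasurableSpace Ω]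
    (P : Measure Ω) [IsProbabilityMeasure P]
    (Θ : Set (EuclideanSpace ℝ (Fin p)))
    (θ₀ : EuclideanSpace ℝ (Fin p)) (hθ₀ : θ₀ ∈ Θ)
    (b : ℕ → EuclideanSpace ℝ (Fin p) → EuclideanSpace ℝ (Fin p))
    (B : ℕ → EuclideanSpace ℝ (Fin p) →L[ℝ] EuclideanSpace ℝ (Fin p))
    (c : ℕ → EuclideanSpace ℝ (Fin p))
    (r : ℕ → EuclideanSpace ℝ (Fin p) → EuclideanSpace ℝ (Fin p))
    (hbdef : ∀ n θ, b n θ = B n θ + c n + r n θ)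
    (C₁ β₁ C₂ β R β₃ : ℝ) (hC₁ : 0 < C₁) (hβ₁ : 0 < β₁) (hC₂ : 0 < C₂)
    (hβ : 0 < β) (hR : 0 < R) (hβ₃ : 0 < β₃)
    (hBnorm : ∀ n : ℕ, 1 ≤ n → ‖B n‖ ≤ C₁ * (n : ℝ) ^ (-β₁))
    (hbnorm : ∀ n : ℕ, 1 ≤ n → ‖b n θ₀‖ ≤ C₂ * (n : ℝ) ^ (-β))
    (hrnorm : ∀ n : ℕ, 1 ≤ n → ∀ θ ∈ Θ, ‖r n θ‖ ≤ R * (n : ℝ) ^ (-β₃))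
    (πhat θtilde : ℕ → Ω → EuclideanSpace ℝ (Fin p))
    (hπint : ∀ n, Integrable (πhat n) P)
    (hθint : ∀ n, Integrable (θtilde n) P)
    (hπΘ : ∀ n, ∀ᵐ ω ∂P, πhat n ω ∈ Θ)
    (hbint : ∀ n, Integrable (fun ω => b n (πhat n ω)) P)
    (hπmean : ∀ n, ∫ ω, πhat n ω ∂P = θ₀ + b n θ₀)
    (hid : ∀ n, (∫ ω, θtilde n ω ∂P) - θ₀ = b n θ₀ - ∫ ω, b n (πhat n ω) ∂P) :
    ∀ n : ℕ, 1 ≤ n →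
      ‖(∫ ω, θtilde n ω ∂P) - θ₀‖ ≤
        (C₁ * C₂ + 2 * R) * (n : ℝ) ^ (-(min (β + β₁) β₃)) :=
  bbc_bias_order_C3_general p P Θ θ₀ hθ₀ b B c r hbdef C₁ β₁ C₂ β R β₃ hC₁ hC₂ hR hBnorm hbnorm
    hrnorm πhat θtilde hπint hπΘ hbint hπmean hid
end

section
/- (Proposition 1, fourth result.) Let p ≥ 1, E := EuclideanSpace ℝ (Fin p), (Ω, 𝔉, P) a probability space with P a probability measure, Θ ⊆ E and θ₀ ∈ Θ. Let C, D ≥ 0 and α, β > 0. For each n ≥ 1 let b n : E → E satisfy ‖b n θ - b n θ'‖ ≤ C * (n : ℝ)^(-β) * ‖θ - θ'‖ for all θ, θ' ∈ Θ, and let π̂ n, θ̃ n : Ω → E be integrable random vectors with π̂ n ∈ Θ almost surely, such that b n ∘ π̂ n is integrable, ∫ ‖π̂ n - θ₀‖ dP ≤ D * (n : ℝ)^(-α), and ∫ θ̃ n dP - θ₀ = b n θ₀ - ∫ b n (π̂ n ω) dP(ω). Then for all n ≥ 1, ‖∫ θ̃ n dP - θ₀‖ ≤ C * D * (n : ℝ)^(-(α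 + β)). -/
open MeasureTheory

theorem norm_sub_integral_comp_le_of_lipschitz_on {E F Ω : Type*} [NormedAddCommGroup E]
    [NormedAddCommGroup F] [NormedSpace ℝ F] [CompleteSpace F] [MeasurableSpace Ω]
    {P : Measure Ω} [IsProbabilityMeasure P] {s : Set E} {f : E → F} {L : ℝ}
    (hf : ∀ x ∈ s, ∀ y ∈ s, ‖f x - f y‖ ≤ L * ‖x - y‖)
    {x₀ : E} (hx₀ : x₀ ∈ s) {X : Ω → E} (hX : Integrable X P)
    (hXs : ∀ᵐ ω ∂P, X ω ∈ s)
    (hfX : Integrable (fun ω => f (X ω)) P) :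
    ‖f x₀ - ∫ ω, f (X ω) ∂P‖ ≤ L * ∫ ω, ‖X ω - x₀‖ ∂P := by
  have h_const : f x₀ - ∫ ω, f (X ω) ∂P = ∫ ω, (f x₀ - f (X ω)) ∂P := by
    rw [integral_sub (integrable_const _) hfX, integral_const, probReal_univ, one_smul]
  calc ‖f x₀ - ∫ ω, f (X ω) ∂P‖
      ≤ ∫ ω, ‖f x₀ - f (X ω)‖ ∂P := h_const ▸ norm_integral_le_integral_norm _
    _ ≤ ∫ ω, L * ‖X ω - x₀‖ ∂P := by
        refine integral_mono_ae ((integrable_const _).sub hfX).norm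
          ((hX.sub (integrable_const x₀)).norm.const_mul L) ?_
        filter_upwards [hXs] with ω hω
        simpa only [norm_sub_rev x₀] using hf x₀ hx₀ _ hω
    _ = L * ∫ ω, ‖X ω - x₀‖ ∂P := integral_const_mul L _

theorem bbc_bias_order_C_general
    (p : ℕ) {Ω : Type*} [MeasurableSpace Ω]
    (P : Measure Ω) [IsProbabilityMeasure P]
    (Θ : Set (EuclideanSpace ℝ (Fin p)))
    (θ₀ : EuclideanSpace ℝ (Fin p)) (hθ₀ : θ₀ ∈ Θ)
    (C D α β : ℝ) (hC : 0 ≤ C)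
    (b : ℕ → EuclideanSpace ℝ (Fin p) → EuclideanSpace ℝ (Fin p))
    (hb : ∀ n : ℕ, 1 ≤ n → ∀ θ ∈ Θ, ∀ θ' ∈ Θ,
      ‖b n θ - b n θ'‖ ≤ C * (n : ℝ) ^ (-β) * ‖θ - θ'‖)
    (πhat θtilde : ℕ → Ω → EuclideanSpace ℝ (Fin p))
    (hπint : ∀ n, Integrable (πhat n) P)
    (hπΘ : ∀ n, ∀ᵐ ω ∂P, πhat n ω ∈ Θ)
    (hbint : ∀ n, Integrable (fun ω => b n (πhat n ω)) P)
    (hmom : ∀ n : ℕ, 1 ≤ n → ∫ ω, ‖πhat n ω - θ₀‖ ∂P ≤ D * (n : ℝ) ^ (-α))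
    (hid : ∀ n, (∫ ω, θtilde n ω ∂P) - θ₀ = b n θ₀ - ∫ ω, b n (πhat n ω) ∂P) :
    ∀ n : ℕ, 1 ≤ n →
      ‖(∫ ω, θtilde n ω ∂P) - θ₀‖ ≤ C * D * (n : ℝ) ^ (-(α + β)) := by
  intro n hn
  have hn_pos : (0 : ℝ) < n := by exact_mod_cast hn
  have hL : 0 ≤ C * (n : ℝ) ^ (-β) := by positivity
  calc ‖(∫ ω, θtilde n ω ∂P) - θ₀‖
      ≤ C * (n : ℝ) ^ (-β) * ∫ ω, ‖πhat n ω - θ₀‖ ∂P := hid n ▸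
        norm_sub_integral_comp_le_of_lipschitz_on (hb n hn) hθ₀ (hπint n) (hπΘ n) (hbint n)
    _ ≤ C * (n : ℝ) ^ (-β) * (D * (n : ℝ) ^ (-α)) :=
        mul_le_mul_of_nonneg_left (hmom n hn) hL
    _ = C * D * (n : ℝ) ^ (-(α + β)) := by
        rw [neg_add, Real.rpow_add hn_pos]
        ring

/-- Proposition 1, fourth result: bias of the bootstrap bias corrected (BBC)
estimator under the general Assumption C, of order `C * D * n^{-(α+β)}`. -/
theorem bbc_bias_order_C
    (p : ℕ) (hp : 1 ≤ p) {Ω : Type*} [MeasurableSpace Ω]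
    (P : Measure Ω) [IsProbabilityMeasure P]
    (Θ : Set (EuclideanSpace ℝ (Fin p)))
    (θ₀ : EuclideanSpace ℝ (Fin p)) (hθ₀ : θ₀ ∈ Θ)
    (C D α β : ℝ) (hC : 0 ≤ C) (hD : 0 ≤ D) (hα : 0 < α) (hβ : 0 < β)
    (b : ℕ → EuclideanSpace ℝ (Fin p) → EuclideanSpace ℝ (Fin p))
    (hb : ∀ n : ℕ, 1 ≤ n → ∀ θ ∈ Θ, ∀ θ' ∈ Θ,
      ‖b n θ - b n θ'‖ ≤ C * (n : ℝ) ^ (-β) * ‖θ - θ'‖)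
    (πhat θtilde : ℕ → Ω → EuclideanSpace ℝ (Fin p))
    (hπint : ∀ n, Integrable (πhat n) P)
    (hθint : ∀ n, Integrable (θtilde n) P)
    (hπΘ : ∀ n, ∀ᵐ ω ∂P, πhat n ω ∈ Θ)
    (hbint : ∀ n, Integrable (fun ω => b n (πhat n ω)) P)
    (hmom : ∀ n : ℕ, 1 ≤ n → ∫ ω, ‖πhat n ω - θ₀‖ ∂P ≤ D * (n : ℝ) ^ (-α))
    (hid : ∀ n, (∫ ω, θtilde n ω ∂P) - θ₀ = b n θ₀ - ∫ ω, b n (πhat n ω) ∂P) :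
    ∀ n : ℕ, 1 ≤ n →
      ‖(∫ ω, θtilde n ω ∂P) - θ₀‖ ≤ C * D * (n : ℝ) ^ (-(α + β)) :=
  bbc_bias_order_C_general p P Θ θ₀ hθ₀ C D α β hC b hb πhat θtilde hπint hπΘ hbint hmom hid
end

section
/- (Theorem 2, first result: exact unbiasedness of the JINI estimator based on an inconsistent initial estimator when both bias functions are linear.) Let p ≥ 1, E := EuclideanSpace ℝ (Fin p), (Ω, 𝔉, P) a probability space with P a probability measure, and θ₀ ∈ E. Let A : E →L[ℝ] E and z ∈ E, and suppose the map id + A : E →L[ℝ] E has a two-sided continuous linear inverse (i.e. there is M : E →L[ℝ] E with M ∘ (id + A) = id and (id + A) ∘ M = id). For each n ∈ ℕ let B n : E →L[ℝ] E with ‖B n‖ ≤ C * (n : ℝ)^(-β₁) for all n ≥ 1, for some C > 0 and β₁ > 0, let c n ∈ E, and let π̂ n, θ̂ n, W n : Ω → E be integrable random vectors such that: (i) ∫ π̂ n dP = θ₀ + A θ₀ + z + B n θ₀ + c n; (ii) ∫ W n dP = 0; (iii) P-almost surely, π̂ n = θ̂ n + A (θ̂ n) + z + B n (θ̂ n) +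 c n + W n. Then there exists N : ℕ such that for all n ≥ N, ∫ θ̂ n dP = θ₀. -/
/-!
Taking expectations in `π̂ = (I + A + Bₙ) θ̂ + z + cₙ + Wₙ` and comparing with the mean of `π̂`
gives `(I + A + Bₙ) (E θ̂ₙ - θ₀) = 0`. Since `M (I + A) = I`, any `u` in the kernel of
`I + A + Bₙ` satisfies `u = -M Bₙ u`, hence `‖u‖ ≤ ‖M‖ ‖Bₙ‖ ‖u‖`; as `‖Bₙ‖ → 0`, this forces
`u = 0` once `‖M‖ ‖Bₙ‖ < 1`.
-/

open MeasureTheory Filter Topology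

theorem tendsto_zero_of_le_mul_rpow_neg {u : ℕ → ℝ} {C β : ℝ} (hβ : 0 < β)
    (hu₀ : ∀ n, 0 ≤ u n) (hu : ∀ n : ℕ, 1 ≤ n → u n ≤ C * (n : ℝ) ^ (-β)) :
    Tendsto u atTop (𝓝 0) := by
  have hbound : Tendsto (fun n : ℕ => C * (n : ℝ) ^ (-β)) atTop (𝓝 0) := by
    simpa using ((tendsto_rpow_neg_atTop hβ).comp tendsto_natCast_atTop_atTop).const_mul C
  exact squeeze_zero' (Eventually.of_forall hu₀)
    ((eventually_ge_atTop 1).mono hu) hbound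

theorem ContinuousLinearMap.injective_add_of_leftInverse_of_norm_mul_lt_one
    {𝕜 E F : Type*} [NontriviallyNormedField 𝕜]
    [NormedAddCommGroup E] [NormedSpace 𝕜 E] [NormedAddCommGroup F] [NormedSpace 𝕜 F]
    {T B : E →L[𝕜] F} {M : F →L[𝕜] E} (hMT : M.comp T = ContinuousLinearMap.id 𝕜 E)
    (hMB : ‖M‖ * ‖B‖ < 1) : Function.Injective (T + B) := by
  rw [injective_iff_map_eq_zero]
  intro x hx
  have hx_eq : x = -M (B x) := by
    have := congrArg M hx
    rw [add_apply, map_add, ← comp_apply M T, hMT, id_apply, map_zero] at this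
    exact eq_neg_of_add_eq_zero_left this
  have hle : ‖x‖ ≤ ‖M‖ * ‖B‖ * ‖x‖ :=
    calc ‖x‖ = ‖M (B x)‖ := (congrArg norm hx_eq).trans (norm_neg _)
      _ ≤ ‖M‖ * ‖B x‖ := M.le_opNorm _
      _ ≤ ‖M‖ * (‖B‖ * ‖x‖) := by gcongr; exact B.le_opNorm x
      _ = ‖M‖ * ‖B‖ * ‖x‖ := by ring
  exact norm_le_zero_iff.mp (by nlinarith [norm_nonneg x])

theorem integral_map_add_const_add {Ω E F : Type*} [MeasurableSpace Ω] {P : Measure Ω}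
    [IsProbabilityMeasure P] [NormedAddCommGroup E] [NormedSpace ℝ E] [CompleteSpace E]
    [NormedAddCommGroup F] [NormedSpace ℝ F] [CompleteSpace F] (L : E →L[ℝ] F) (v : F)
    {X : Ω → E} {W : Ω → F}
    (hX : Integrable X P) (hW : Integrable W P) :
    ∫ ω, L (X ω) + v + W ω ∂P = L (∫ ω, X ω ∂P) + v + ∫ ω, W ω ∂P := by
  have hLX : Integrable (fun ω => L (X ω)) P := L.integrable_comp hX
  have hLXv : Integrable (fun ω => L (X ω) + v) P := hLX.add (integrable_const v)
  rw [integral_add hLXv hW, integral_add hLX (integrable_const v), L.integral_comp_comm hX,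
    integral_const, probReal_univ, one_smul]

theorem jini_unbiased_inconsistent_linear_general
    (p : ℕ) {Ω : Type*} [MeasurableSpace Ω]
    (P : Measure Ω) [IsProbabilityMeasure P]
    (θ₀ : EuclideanSpace ℝ (Fin p))
    (A : EuclideanSpace ℝ (Fin p) →L[ℝ] EuclideanSpace ℝ (Fin p))
    (z : EuclideanSpace ℝ (Fin p))
    (M : EuclideanSpace ℝ (Fin p) →L[ℝ] EuclideanSpace ℝ (Fin p))
    (hM1 : M.comp (ContinuousLinearMap.id ℝ (EuclideanSpace ℝ (Fin p)) + A) =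
      ContinuousLinearMap.id ℝ (EuclideanSpace ℝ (Fin p)))
    (B : ℕ → EuclideanSpace ℝ (Fin p) →L[ℝ] EuclideanSpace ℝ (Fin p))
    (C β₁ : ℝ) (hβ₁ : 0 < β₁)
    (hBnorm : ∀ n : ℕ, 1 ≤ n → ‖B n‖ ≤ C * (n : ℝ) ^ (-β₁))
    (c : ℕ → EuclideanSpace ℝ (Fin p))
    (πhat θhat W : ℕ → Ω → EuclideanSpace ℝ (Fin p))
    (hθint : ∀ n, Integrable (θhat n) P)
    (hWint : ∀ n, Integrable (W n) P)
    (hπmean : ∀ n, ∫ ω, πhat n ω ∂P = θ₀ + A θ₀ + z + B n θ₀ + c n)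
    (hWmean : ∀ n, ∫ ω, W n ω ∂P = 0)
    (hfix : ∀ n, ∀ᵐ ω ∂P, πhat n ω =
      θhat n ω + A (θhat n ω) + z + B n (θhat n ω) + c n + W n ω) :
    ∃ N : ℕ, ∀ n : ℕ, N ≤ n → ∫ ω, θhat n ω ∂P = θ₀ := by
  set I := ContinuousLinearMap.id ℝ (EuclideanSpace ℝ (Fin p))
  have hsmall : ∀ᶠ n in atTop, ‖M‖ * ‖B n‖ < 1 := by
    have hB := tendsto_zero_of_le_mul_rpow_neg hβ₁ (fun n => norm_nonneg (B n)) hBnorm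
    exact (hB.const_mul ‖M‖).eventually_lt_const (by simp)
  obtain ⟨N, hN⟩ := eventually_atTop.mp hsmall
  refine ⟨N, fun n hn => ContinuousLinearMap.injective_add_of_leftInverse_of_norm_mul_lt_one
    hM1 (hN n hn) (add_right_cancel (b := z + c n) ?_)⟩
  have hlinear : ∀ x, x + A x + z + B n x + c n = (I + A + B n) x + (z + c n) := fun x => by
    simp only [add_apply, I, ContinuousLinearMap.id_apply]; abel
  have hmean := integral_congr_ae (hfix n)
  have hπmean_n := hπmean n
  simp only [hlinear] at hmean hπmean_n
  rw [← hπmean_n, hmean, integral_map_add_const_add _ _ (hθint n) (hWint n), hWmean, add_zero]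

/-- Theorem 2, first result: the JINI estimator based on an inconsistent
initial estimator is exactly unbiased for all sufficiently large (but finite)
`n` when both the asymptotic bias `a(θ) = A θ + z` (with `I + A` invertible)
and the finite-sample bias `b(θ, n) = B n θ + c n` are linear. -/
theorem jini_unbiased_inconsistent_linear
    (p : ℕ) (hp : 1 ≤ p) {Ω : Type*} [MeasurableSpace Ω]
    (P : Measure Ω) [IsProbabilityMeasure P]
    (θ₀ : EuclideanSpace ℝ (Fin p))
    (A : EuclideanSpace ℝ (Fin p) →L[ℝ] EuclideanSpace ℝ (Fin p))
    (z : EuclideanSpace ℝ (Fin p))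
    (M : EuclideanSpace ℝ (Fin p) →L[ℝ] EuclideanSpace ℝ (Fin p))
    (hM1 : M.comp (ContinuousLinearMap.id ℝ (EuclideanSpace ℝ (Fin p)) + A) =
      ContinuousLinearMap.id ℝ (EuclideanSpace ℝ (Fin p)))
    (hM2 : (ContinuousLinearMap.id ℝ (EuclideanSpace ℝ (Fin p)) + A).comp M =
      ContinuousLinearMap.id ℝ (EuclideanSpace ℝ (Fin p)))
    (B : ℕ → EuclideanSpace ℝ (Fin p) →L[ℝ] EuclideanSpace ℝ (Fin p))
    (C β₁ : ℝ) (hC : 0 < C) (hβ₁ : 0 < β₁)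
    (hBnorm : ∀ n : ℕ, 1 ≤ n → ‖B n‖ ≤ C * (n : ℝ) ^ (-β₁))
    (c : ℕ → EuclideanSpace ℝ (Fin p))
    (πhat θhat W : ℕ → Ω → EuclideanSpace ℝ (Fin p))
    (hπint : ∀ n, Integrable (πhat n) P)
    (hθint : ∀ n, Integrable (θhat n) P)
    (hWint : ∀ n, Integrable (W n) P)
    (hπmean : ∀ n, ∫ ω, πhat n ω ∂P = θ₀ + A θ₀ + z + B n θ₀ + c n)
    (hWmean : ∀ n, ∫ ω, W n ω ∂P = 0)
    (hfix : ∀ n, ∀ᵐ ω ∂P, πhat n ω =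
      θhat n ω + A (θhat n ω) + z + B n (θhat n ω) + c n + W n ω) :
    ∃ N : ℕ, ∀ n : ℕ, N ≤ n → ∫ ω, θhat n ω ∂P = θ₀ :=
  jini_unbiased_inconsistent_linear_general p P θ₀ A z M hM1 B C β₁ hβ₁ hBnorm c πhat θhat W hθint
    hWint hπmean hWmean hfix
end

section
/- (Corollary 1, exponent comparison: the JINI bias order dominates the BBC bias order.) Let α, β, β₁, β₂, β₃, β₄ be real numbers with 0 < α, α < β, β = min β₁ (min β₂ β₃), and β₃ < β₄. Define γ₂ := max (min (2*α + β₃) (min (2*β₃) β₄)) (α + β), γ₃ := max β₃ (α + β), υ₂ := max (min (β + β₁) (min (β + β₃) (min (2*α + β₃) β₄))) (α + β), and υ₃ := max (min (β + β₁) β₃) (α + β). Then γ₂ ≥ υ₂ and γ₃ ≥ υ₃. -/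
theorem jini_dominates_bbc_exponents_general
    (α β β₁ β₂ β₃ β₄ : ℝ)
    (hβ : β = min β₁ (min β₂ β₃)) :
    max (min (2 * α + β₃) (min (2 * β₃) β₄)) (α + β) ≥
      max (min (β + β₁) (min (β + β₃) (min (2 * α + β₃) β₄))) (α + β) ∧
    max β₃ (α + β) ≥ max (min (β + β₁) β₃) (α + β) := by
  have hββ₃ : β ≤ β₃ := hβ ▸ min_le_of_right_le (min_le_right _ _)
  refine ⟨max_le_max_right _ (le_min ?_ (le_min ?_ ?_)), max_le_max_right _ (min_le_right _ _)⟩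
  · exact min_le_of_right_le <| min_le_of_right_le <| min_le_left _ _
  · exact min_le_of_right_le <| min_le_of_left_le <| by linarith
  · exact min_le_of_right_le <| min_le_of_right_le <| min_le_right _ _

/-- Corollary 1 (exponent comparison): the JINI bias exponents dominate the
BBC bias exponents, `γ₂ ≥ υ₂` and `γ₃ ≥ υ₃`. -/
theorem jini_dominates_bbc_exponents
    (α β β₁ β₂ β₃ β₄ : ℝ) (hα : 0 < α) (hαβ : α < β)
    (hβ : β = min β₁ (min β₂ β₃)) (hβ₃₄ : β₃ < β₄) :
    max (min (2 * α + β₃) (min (2 * β₃) β₄)) (α + β) ≥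
      max (min (β + β₁) (min (β + β₃) (min (2 * α + β₃) β₄))) (α + β) ∧
    max β₃ (α + β) ≥ max (min (β + β₁) β₃) (α + β) :=
  jini_dominates_bbc_exponents_general α β β₁ β₂ β₃ β₄ hβ
end
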